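/- arXiv:math/0404301 — 8 statements merged into one kernel-verified Lean document; each statement's English description precedes it below -/
import Mathlib

section
/- Let n be prime, D the algebra of diagonal matrices in M_n(ℂ), and S the algebra of circulant matrices (spanned by the circulant permutation matrices S_l = Σ_i E_{i,i+l}, indices mod n). Then the span of all commutators [d, s] with d ∈ D, s ∈ S has dimension n² - 2n + 1 over ℂ. -/
open Matrix Finset

lemma sum_range_mul_cast {n : ℕ} [NeZero n] {k : ZMod n}
    (f : ZMod n → ℂ) : ∑ t ∈ Finset.range n, f ((t : ZMod n) * k) = ∑ z : ZMod n, f (z * k) := by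
  refine Finset.sum_nbij' (fun t => ((t : ZMod n))) (fun z => z.val) ?_ ?_ ?_ ?_ ?_
  · intro t ht; exact Finset.mem_univ _
  · intro z hz; exact Finset.mem_range.mpr z.val_lt
  · intro t ht; exact ZMod.val_cast_of_lt (Finset.mem_range.mp ht)
  · intro z hz; exact (ZMod.natCast_rightInverse z)
  · intro t ht; rfl

lemma exists_diff_eq {n : ℕ} [NeZero n] (hn : n.Prime) {k : ZMod n} (hk : k ≠ 0)
    (f : ZMod n → ℂ) (hf : ∑ i, f i = 0) :
    ∃ a : ZMod n → ℂ, ∀ i, a i - a (i - k) = f i := by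
  haveI := Fact.mk hn
  refine ⟨fun i => ∑ t ∈ Finset.range ((i * k⁻¹).val + 1), f ((t : ZMod n) * k), fun i => ?_⟩
  simp only
  have hcast : ∀ z : ZMod n, ((z.val : ZMod n)) = z := fun z => ZMod.natCast_rightInverse z
  obtain ⟨m, hm⟩ : ∃ m, (i * k⁻¹).val = m := ⟨_, rfl⟩
  have hmn : m < n := hm ▸ (i * k⁻¹).val_lt
  have hik : ((m : ZMod n)) * k = i := by
    rw [← hm, hcast, mul_assoc, inv_mul_cancel₀ hk, mul_one]
  have hsub : (i - k) * k⁻¹ = i * k⁻¹ - 1 := by field_simp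
  rw [hm]
  rcases Nat.eq_zero_or_pos m with h0 | hpos
  · subst h0
    have hi0 : i = 0 := by simpa using hik.symm
    have hval : ((i - k) * k⁻¹).val = n - 1 := by
      rw [hsub, hi0, zero_mul, zero_sub]
      obtain ⟨n', rfl⟩ : ∃ n', n = n' + 1 := ⟨n - 1, (Nat.succ_pred_eq_of_pos hn.pos).symm⟩
      exact ZMod.val_neg_one n'
    have hn1 : n - 1 + 1 = n := by omega
    rw [hval, hn1, sum_range_mul_cast f]
    have : ∑ z : ZMod n, f (z * k) = ∑ z : ZMod n, f z :=
      Fintype.sum_equiv (Equiv.mulRight₀ k hk) _ _ (fun z => rfl)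
    rw [this, hf, hi0]
    simp
  · obtain ⟨m', rfl⟩ : ∃ m', m = m' + 1 := ⟨m - 1, (Nat.succ_pred_eq_of_pos hpos).symm⟩
    have hval : ((i - k) * k⁻¹).val = m' := by
      have h1 : (i - k) * k⁻¹ = ((m' : ℕ) : ZMod n) := by
        rw [hsub, ← hcast (i * k⁻¹), hm]; push_cast; ring
      rw [h1, ZMod.val_cast_of_lt (lt_trans (Nat.lt_succ_self m') hmn)]
    rw [hval, Finset.sum_range_succ _ (m' + 1)]
    rw [hik]
    ring

lemma comm_entry {n : ℕ} [NeZero n] (d : Matrix (ZMod n) (ZMod n) ℂ) (hd : d.IsDiag)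
    (v : ZMod n → ℂ) (i j : ZMod n) :
    (d * Matrix.circulant v - Matrix.circulant v * d) i j = (d i i - d j j) * v (i - j) := by
  rw [Matrix.sub_apply, Matrix.mul_apply, Matrix.mul_apply]
  have h1 : ∑ a, d i a * Matrix.circulant v a j = d i i * v (i - j) := by
    rw [Finset.sum_eq_single i]
    · rw [Matrix.circulant_apply]
    · intro b _ hb; rw [hd (Ne.symm hb), zero_mul]
    · intro h; exact absurd (Finset.mem_univ i) h
  have h2 : ∑ a, Matrix.circulant v i a * d a j = v (i - j) * d j j := by
    rw [Finset.sum_eq_single j]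
    · rw [Matrix.circulant_apply]
    · intro b _ hb; rw [hd hb, mul_zero]
    · intro h; exact absurd (Finset.mem_univ j) h
  rw [h1, h2]; ring

/-- For `n` prime, the span of all commutators `[d,s]` with `d` a diagonal matrix and
`s` a circulant matrix in `Mₙ(ℂ)` has dimension `n² - 2n + 1`. -/
theorem finrank_span_commutators_diag_circulant {n : ℕ} [NeZero n] (hn : n.Prime) :
    Module.finrank ℂ (Submodule.span ℂ
      {x : Matrix (ZMod n) (ZMod n) ℂ |
        ∃ (d : Matrix (ZMod n) (ZMod n) ℂ) (v : ZMod n → ℂ),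
          d.IsDiag ∧ x = d * Matrix.circulant v - Matrix.circulant v * d}) =
      n ^ 2 - 2 * n + 1 := by
  classical
  set φ : Matrix (ZMod n) (ZMod n) ℂ →ₗ[ℂ] (ZMod n → ℂ) × ({k : ZMod n // k ≠ 0} → ℂ) :=
    { toFun := fun x => (fun i => x i i, fun k => ∑ i, x i (i - (k : ZMod n))),
      map_add' := by
        intro x y
        refine Prod.ext (funext fun i => rfl) (funext fun k => ?_)
        simp [Finset.sum_add_distrib]
      map_smul' := by
        intro c x
        refine Prod.ext (funext fun i => rfl) (funext fun k => ?_)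
        simp [Finset.mul_sum] } with hφ
  have hspan : Submodule.span ℂ
      {x : Matrix (ZMod n) (ZMod n) ℂ |
        ∃ (d : Matrix (ZMod n) (ZMod n) ℂ) (v : ZMod n → ℂ),
          d.IsDiag ∧ x = d * Matrix.circulant v - Matrix.circulant v * d} =
      LinearMap.ker φ := by
    apply le_antisymm
    · rw [Submodule.span_le]
      rintro x ⟨d, v, hd, rfl⟩
      rw [SetLike.mem_coe, LinearMap.mem_ker]
      refine Prod.ext (funext fun i => ?_) (funext fun k => ?_)
      · simp only [hφ, LinearMap.coe_mk, AddHom.coe_mk]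
        rw [comm_entry d hd]
        simp
      · simp only [hφ, LinearMap.coe_mk, AddHom.coe_mk]
        have : ∀ i, (d * Matrix.circulant v - Matrix.circulant v * d) i (i - (k : ZMod n)) =
            d i i * v k - d (i - (k : ZMod n)) (i - (k : ZMod n)) * v k := by
          intro i
          rw [comm_entry d hd]
          have : i - (i - (k : ZMod n)) = (k : ZMod n) := by ring
          rw [this]; ring
        simp only [this, Finset.sum_sub_distrib]
        rw [Fintype.sum_equiv (Equiv.subRight (k : ZMod n))
          (fun i => d (i - (k : ZMod n)) (i - (k : ZMod n)) * v k) (fun i => d i i * v k)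
          (fun i => rfl)]
        simp
    · intro x hx
      rw [LinearMap.mem_ker] at hx
      have hdiag : ∀ i, x i i = 0 := fun i => congrFun (congrArg Prod.fst hx) i
      have hsum : ∀ k : {k : ZMod n // k ≠ 0}, ∑ i, x i (i - (k : ZMod n)) = 0 :=
        fun k => congrFun (congrArg Prod.snd hx) k
      have hxsum : x = ∑ k : ZMod n,
          (Matrix.of fun i j => if i - j = k then x i j else 0) := by
        ext i j
        rw [Matrix.sum_apply]
        simp [Finset.sum_ite_eq]
      rw [hxsum]
      apply Submodule.sum_mem
      intro k _
      by_cases hk : k = 0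
      · subst hk
        have : (Matrix.of fun i j => if i - j = 0 then x i j else 0) =
            (0 : Matrix (ZMod n) (ZMod n) ℂ) := by
          ext i j
          simp only [Matrix.of_apply, Matrix.zero_apply]
          split_ifs with h
          · have : i = j := by rwa [sub_eq_zero] at h
            subst this; exact hdiag i
          · rfl
        rw [this]; exact Submodule.zero_mem _
      · obtain ⟨a, ha⟩ := exists_diff_eq hn hk (fun i => x i (i - k)) (hsum ⟨k, hk⟩)
        apply Submodule.subset_span
        refine ⟨Matrix.diagonal a, fun t => if t = k then 1 else 0,
          Matrix.isDiag_diagonal a, ?_⟩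
        ext i j
        rw [comm_entry _ (Matrix.isDiag_diagonal a)]
        simp only [Matrix.diagonal_apply_eq, Matrix.of_apply]
        split_ifs with h
        · have hj : j = i - k := by rw [← h]; ring
          subst hj
          rw [mul_one]
          exact (ha i).symm ▸ (ha i)
        · rw [mul_zero]
  rw [hspan]
  have hsurj : Function.Surjective φ := by
    rintro ⟨g, h⟩
    refine ⟨Matrix.of fun i j =>
      if hij : i = j then g i else if i = 0 then h ⟨i - j, sub_ne_zero.mpr hij⟩ else 0, ?_⟩
    refine Prod.ext (funext fun i => ?_) (funext fun k => ?_)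
    · simp [hφ]
    · simp only [hφ, LinearMap.coe_mk, AddHom.coe_mk, Matrix.of_apply]
      rw [Finset.sum_eq_single (0 : ZMod n)]
      · have hne : (0 : ZMod n) ≠ 0 - (k : ZMod n) := by
          intro hc
          exact k.2 (sub_eq_self.mp hc.symm)
        rw [dif_neg hne, if_pos rfl]
        congr 1
        exact Subtype.ext (by ring)
      · intro b _ hb
        have hne : b ≠ b - (k : ZMod n) := by
          intro hc
          exact k.2 (sub_eq_self.mp hc.symm)
        rw [dif_neg hne, if_neg hb]
      · intro hmem; exact absurd (Finset.mem_univ 0) hmem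
  have hrank := LinearMap.finrank_range_add_finrank_ker φ
  rw [LinearMap.range_eq_top.mpr hsurj, finrank_top] at hrank
  have hcodo : Module.finrank ℂ ((ZMod n → ℂ) × ({k : ZMod n // k ≠ 0} → ℂ)) =
      n + (n - 1) := by
    rw [Module.finrank_prod, Module.finrank_pi, Module.finrank_pi, ZMod.card]
    congr 1
    rw [Fintype.card_subtype_compl, Fintype.card_subtype_eq (0 : ZMod n), ZMod.card]
  have hdom : Module.finrank ℂ (Matrix (ZMod n) (ZMod n) ℂ) = n * n := by
    rw [Module.finrank_matrix, ZMod.card, Module.finrank_self, mul_one]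
  rw [hcodo, hdom] at hrank
  have h2 : 2 ≤ n := hn.two_le
  have hmul : 2 * n ≤ n * n := by nlinarith
  have hsq : n ^ 2 = n * n := sq n
  omega
end

section
/- Let n be prime and let X_{k,l} = E_{k,k+l} - E_{k-l,k} for k ∈ ℤ/nℤ and l ∈ ℤ/nℤ, l ≠ 0 (indices mod n). If complex numbers c_{k,l} satisfy Σ_{k,l} c_{k,l} X_{k,l} = 0, then for each fixed nonzero l, c_{k,l} = c_{0,l} for all k; hence the kernel of the map (c_{k,l}) ↦ Σ c_{k,l} X_{k,l} defined on ℂ^{n×n} (including l = 0, where X_{k,0} = 0) has dimension 2n - 1. -/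
/-!
The `(i, j)` entry of `Σ c_{k,l} X_{k,l}` is `c_{i,j-i} - c_{j,j-i}`, so `c` lies in the kernel iff
every column `k ↦ c_{k,l}` is `l`-periodic. For `n` prime each `l ≠ 0` is a unit, hence generates
`ℤ/nℤ` additively, and the periodic columns are constant; the column `l = 0` is unconstrained.
The kernel is therefore parametrized by `n + (n - 1)` free values.
-/

open Matrix Function

/-- `X k l = E_{k,k+l} - E_{k-l,k}` (note `X k 0 = 0`). -/
noncomputable def Xmat (n : ℕ) [NeZero n] (k l : ZMod n) : Matrix (ZMod n) (ZMod n) ℂ :=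
  single k (k + l) (1 : ℂ) - single (k - l) k (1 : ℂ)

/-- The linear map `(c_{k,l}) ↦ Σ_{k,l} c_{k,l} X_{k,l}`. -/
noncomputable def XmatMap (n : ℕ) [NeZero n] :
    (ZMod n × ZMod n → ℂ) →ₗ[ℂ] Matrix (ZMod n) (ZMod n) ℂ where
  toFun c := ∑ p : ZMod n × ZMod n, c p • Xmat n p.1 p.2
  map_add' c c' := by
    simp [add_smul, Finset.sum_add_distrib]
  map_smul' a c := by
    simp [smul_smul, Finset.smul_sum]

/-- Every residue is a natural multiple of a unit. -/
theorem Function.Periodic.zmod_apply_eq_apply_zero {n : ℕ} [NeZero n] {α : Type*}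
    {f : ZMod n → α} {l : ZMod n} (hf : Periodic f l) (hl : IsUnit l) (k : ZMod n) :
    f k = f 0 := by
  obtain ⟨u, rfl⟩ := hl
  have hk : (((k * ↑u⁻¹).val : ℕ) : ZMod n) * u = k := by
    simp [mul_assoc]
  rw [← hk, hf.nat_mul_eq]

noncomputable def kerXmatMapParam (n : ℕ) :
    ((ZMod n → ℂ) × ({l : ZMod n // l ≠ 0} → ℂ)) →ₗ[ℂ] (ZMod n × ZMod n → ℂ) where
  toFun ab p := if h : p.2 = 0 then ab.1 p.1 else ab.2 ⟨p.2, h⟩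
  map_add' ab ab' := by
    funext p
    by_cases h : p.2 = 0 <;> simp [h]
  map_smul' a ab := by
    funext p
    by_cases h : p.2 = 0 <;> simp [h]

theorem kerXmatMapParam_injective (n : ℕ) : Injective (kerXmatMapParam n) := by
  rintro ⟨a, b⟩ ⟨a', b'⟩ h
  ext x
  · simpa [kerXmatMapParam] using congrFun h (x, 0)
  · simpa [kerXmatMapParam, x.2] using congrFun h (0, x.1)

section

variable {n : ℕ} [NeZero n]

theorem XmatMap_apply_apply (c : ZMod n × ZMod n → ℂ) (i j : ZMod n) :
    XmatMap n c i j = c (i, j - i) - c (j, j - i) := by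
  have h₁ : ∀ l, i + l = j ↔ l = j - i := fun l => eq_sub_iff_add_eq'.symm
  have h₂ : ∀ k l, k - l = i ∧ k = j ↔ k = j ∧ l = j - i := fun k l => by
    constructor <;> rintro ⟨rfl, rfl⟩ <;> simp
  simp [XmatMap, Xmat, Matrix.sum_apply, single_apply, Fintype.sum_prod_type, mul_sub,
    Finset.sum_sub_distrib, ite_and, h₁, h₂]

theorem mem_ker_XmatMap_iff {c : ZMod n × ZMod n → ℂ} :
    c ∈ LinearMap.ker (XmatMap n) ↔ ∀ l, Periodic (fun k => c (k, l)) l := by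
  simp only [LinearMap.mem_ker, ← Matrix.ext_iff, XmatMap_apply_apply, Matrix.zero_apply,
    sub_eq_zero]
  constructor
  · intro h l k
    simpa using (h k (k + l)).symm
  · intro h i j
    simpa using (h (j - i) i).symm

theorem mem_ker_XmatMap_iff_of_prime [Fact n.Prime] {c : ZMod n × ZMod n → ℂ} :
    c ∈ LinearMap.ker (XmatMap n) ↔ ∀ l ≠ 0, ∀ k, c (k, l) = c (0, l) := by
  rw [mem_ker_XmatMap_iff]
  refine ⟨fun h l hl => (h l).zmod_apply_eq_apply_zero hl.isUnit, fun h l k => ?_⟩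
  rcases eq_or_ne l 0 with rfl | hl
  · simp
  · exact (h l hl (k + l)).trans (h l hl k).symm

theorem range_kerXmatMapParam [Fact n.Prime] :
    LinearMap.range (kerXmatMapParam n) = LinearMap.ker (XmatMap n) := by
  ext c
  rw [mem_ker_XmatMap_iff_of_prime]
  constructor
  · rintro ⟨ab, rfl⟩ l hl k
    simp [kerXmatMapParam, hl]
  · refine fun h => ⟨(fun k => c (k, 0), fun l => c (0, l)), funext fun ⟨k, l⟩ => ?_⟩
    by_cases hl : l = 0
    · simp [kerXmatMapParam, hl]
    · simp [kerXmatMapParam, hl, h l hl k]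

end

/-- For `n` prime: if `Σ c_{k,l} X_{k,l} = 0` then `c_{k,l} = c_{0,l}` for all `k` and all
nonzero `l`; moreover the kernel of `(c_{k,l}) ↦ Σ c_{k,l} X_{k,l}` has dimension `2n - 1`. -/
theorem kernel_of_commutator_map {n : ℕ} [NeZero n] (hn : n.Prime) :
    (∀ c : ZMod n × ZMod n → ℂ,
        (∑ p : ZMod n × ZMod n, c p • Xmat n p.1 p.2) = 0 →
          ∀ l : ZMod n, l ≠ 0 → ∀ k : ZMod n, c (k, l) = c (0, l)) ∧
      Module.finrank ℂ (LinearMap.ker (XmatMap n)) = 2 * n - 1 := by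
  have : Fact n.Prime := ⟨hn⟩
  refine ⟨fun c hc => mem_ker_XmatMap_iff_of_prime.1 hc, ?_⟩
  rw [← range_kerXmatMapParam, LinearMap.finrank_range_of_inj (kerXmatMapParam_injective n),
    Module.finrank_prod, Module.finrank_fintype_fun_eq_card, Module.finrank_fintype_fun_eq_card,
    Fintype.card_subtype_compl, Fintype.card_subtype_eq, ZMod.card]
  omega
end

section
/- Let (Q₋₁ ⊆ P₋₁ ⊆ P₀, Q₋₁ ⊆ Q₀ ⊆ P₀, τ) be a commuting square of finite-dimensional von Neumann algebras. Then the subspace (Q₋₁' ∩ P₋₁) + (Q₋₁' ∩ Q₀) + (P₋₁' ∩ P₀) + (Q₀' ∩ P₀) of P₀ is orthogonal to the subspace span{pq - qp : p ∈ P₋₁, q ∈ Q₀}, with respect to the inner product ⟨x,y⟩ = τ(y*x). -/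
open Matrix

/-- `E` is the `τ`-preserving conditional expectation of `Mₙ(ℂ)` onto the unital
*-subalgebra `B`: the orthogonal projection onto `B` w.r.t. `⟨x,y⟩ = τ(y*x)`. -/
def IsCondExp {n : ℕ} (τ : Matrix (Fin n) (Fin n) ℂ →ₗ[ℂ] ℂ)
    (B : StarSubalgebra ℂ (Matrix (Fin n) (Fin n) ℂ))
    (E : Matrix (Fin n) (Fin n) ℂ →ₗ[ℂ] Matrix (Fin n) (Fin n) ℂ) : Prop :=
  (∀ x, E x ∈ B) ∧ (∀ b ∈ B, E b = b) ∧ ∀ x, ∀ b ∈ B, τ (bᴴ * (x - E x)) = 0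

/-- Left version of the orthogonality property: for `b ∈ B`,
`τ (b * (x - E x)) = 0`. -/
lemma IsCondExp.left_orth {n : ℕ} {τ : Matrix (Fin n) (Fin n) ℂ →ₗ[ℂ] ℂ}
    {B : StarSubalgebra ℂ (Matrix (Fin n) (Fin n) ℂ)}
    {E : Matrix (Fin n) (Fin n) ℂ →ₗ[ℂ] Matrix (Fin n) (Fin n) ℂ}
    (hE : IsCondExp τ B E) {b : Matrix (Fin n) (Fin n) ℂ} (hb : b ∈ B)
    (x : Matrix (Fin n) (Fin n) ℂ) : τ (b * (x - E x)) = 0 := by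
  have hbH : bᴴ ∈ B := by
    have := star_mem (s := B) hb
    rwa [Matrix.star_eq_conjTranspose] at this
  have h := hE.2.2 x bᴴ hbH
  simpa using h

/-- Replacement lemma: `τ (b * x) = τ (b * E x)` for `b ∈ B`. -/
lemma IsCondExp.replace {n : ℕ} {τ : Matrix (Fin n) (Fin n) ℂ →ₗ[ℂ] ℂ}
    {B : StarSubalgebra ℂ (Matrix (Fin n) (Fin n) ℂ)}
    {E : Matrix (Fin n) (Fin n) ℂ →ₗ[ℂ] Matrix (Fin n) (Fin n) ℂ}
    (hE : IsCondExp τ B E) {b : Matrix (Fin n) (Fin n) ℂ} (hb : b ∈ B)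
    (x : Matrix (Fin n) (Fin n) ℂ) : τ (b * x) = τ (b * E x) := by
  have h := hE.left_orth hb x
  rw [mul_sub, map_sub, sub_eq_zero] at h
  exact h

/-- the conditional expectation is self-adjoint w.r.t. the trace pairing. -/
lemma IsCondExp.selfAdj {n : ℕ} {τ : Matrix (Fin n) (Fin n) ℂ →ₗ[ℂ] ℂ}
    (htr : ∀ x y, τ (x * y) = τ (y * x))
    {B : StarSubalgebra ℂ (Matrix (Fin n) (Fin n) ℂ)}
    {E : Matrix (Fin n) (Fin n) ℂ →ₗ[ℂ] Matrix (Fin n) (Fin n) ℂ}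
    (hE : IsCondExp τ B E) (x y : Matrix (Fin n) (Fin n) ℂ) :
    τ (x * E y) = τ (E x * y) := by
  have h1 : τ (E y * x) = τ (E y * E x) := hE.replace (hE.1 y) x
  have h2 : τ (E x * y) = τ (E x * E y) := hE.replace (hE.1 x) y
  rw [htr x (E y), h1, htr (E y) (E x), h2]

/-- In a commuting square `(Q₋₁ ⊆ P₋₁ ⊆ P₀, Q₋₁ ⊆ Q₀ ⊆ P₀, τ)` with `P₀ = Mₙ(ℂ)`, the
subspace `(Q₋₁' ∩ P₋₁) + (Q₋₁' ∩ Q₀) + (P₋₁' ∩ P₀) + (Q₀' ∩ P₀)` is orthogonal to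
`span{pq - qp : p ∈ P₋₁, q ∈ Q₀}` with respect to `⟨x,y⟩ = τ(y*x)`. -/
theorem commutants_orthogonal_to_commutators {n : ℕ}
    (τ : Matrix (Fin n) (Fin n) ℂ →ₗ[ℂ] ℂ)
    (htr : ∀ x y, τ (x * y) = τ (y * x)) (hτ1 : τ 1 = 1)
    (hstar : ∀ x, τ xᴴ = star (τ x))
    (hfaith : ∀ x, τ (xᴴ * x) = 0 → x = 0)
    (Qm Pm Q0 : StarSubalgebra ℂ (Matrix (Fin n) (Fin n) ℂ))
    (hQP : Qm ≤ Pm) (hQQ : Qm ≤ Q0)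
    (EPm EQ0 EQm : Matrix (Fin n) (Fin n) ℂ →ₗ[ℂ] Matrix (Fin n) (Fin n) ℂ)
    (hEP : IsCondExp τ Pm EPm) (hEQ0 : IsCondExp τ Q0 EQ0) (hEQm : IsCondExp τ Qm EQm)
    (hcs : ∀ x, EPm (EQ0 x) = EQm x)
    (v₁ v₂ v₃ v₄ : Matrix (Fin n) (Fin n) ℂ)
    (hv₁ : v₁ ∈ Pm ∧ ∀ y ∈ Qm, v₁ * y = y * v₁)
    (hv₂ : v₂ ∈ Q0 ∧ ∀ y ∈ Qm, v₂ * y = y * v₂)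
    (hv₃ : ∀ y ∈ Pm, v₃ * y = y * v₃)
    (hv₄ : ∀ y ∈ Q0, v₄ * y = y * v₄) :
    ∀ w ∈ Submodule.span ℂ {x : Matrix (Fin n) (Fin n) ℂ |
        ∃ p ∈ Pm, ∃ q ∈ Q0, x = p * q - q * p},
      τ (wᴴ * (v₁ + v₂ + v₃ + v₄)) = 0 := by
  -- the reverse commuting square identity `EQ0 ∘ EPm = EQm`
  have hcs' : ∀ x, EQ0 (EPm x) = EQm x := by
    intro x
    have key : ∀ y, τ (y * (EQ0 (EPm x) - EQm x)) = 0 := by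
      intro y
      have h1 : τ (y * EQ0 (EPm x)) = τ (EQ0 y * EPm x) := hEQ0.selfAdj htr y (EPm x)
      have h2 : τ (EQ0 y * EPm x) = τ (EPm (EQ0 y) * x) := by
        have := hEP.selfAdj htr (EQ0 y) x
        rw [← this]
      have h3 : τ (EQm y * x) = τ (y * EQm x) := (hEQm.selfAdj htr y x).symm
      rw [mul_sub, map_sub, h1, h2, hcs, h3, sub_self]
    have := key (EQ0 (EPm x) - EQm x)ᴴ
    have hz := hfaith _ this
    exact sub_eq_zero.mp hz
  intro w hw
  induction hw using Submodule.span_induction with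
  | mem x hx =>
    obtain ⟨p, hp, q, hq, rfl⟩ := hx
    have hpH : pᴴ ∈ Pm := by
      have := star_mem (s := Pm) hp
      rwa [Matrix.star_eq_conjTranspose] at this
    have hqH : qᴴ ∈ Q0 := by
      have := star_mem (s := Q0) hq
      rwa [Matrix.star_eq_conjTranspose] at this
    -- e = EPm qᴴ = EQm qᴴ ∈ Qm
    set e := EPm qᴴ with he
    have heQm : e ∈ Qm := by
      have : EPm qᴴ = EQm qᴴ := by
        rw [← hcs]; exact congrArg EPm (hEQ0.2.1 qᴴ hqH).symm
      rw [he, this]; exact hEQm.1 qᴴ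
    -- f = EQ0 pᴴ = EQm pᴴ ∈ Qm
    set f := EQ0 pᴴ with hf
    have hfQm : f ∈ Qm := by
      have : EQ0 pᴴ = EQm pᴴ := by
        rw [← hcs']; exact congrArg EQ0 (hEP.2.1 pᴴ hpH).symm
      rw [hf, this]; exact hEQm.1 pᴴ
    have key : ∀ v, v ∈ Pm ∧ (∀ y ∈ Qm, v * y = y * v) ∨
        v ∈ Q0 ∧ (∀ y ∈ Qm, v * y = y * v) ∨
        (∀ y ∈ Pm, v * y = y * v) ∨ (∀ y ∈ Q0, v * y = y * v) →
        τ ((p * q - q * p)ᴴ * v) = 0 := by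
      intro v hv
      have expand : (p * q - q * p)ᴴ * v = qᴴ * pᴴ * v - pᴴ * qᴴ * v := by
        simp [Matrix.conjTranspose_sub, Matrix.conjTranspose_mul, sub_mul, mul_assoc]
      rw [expand, map_sub, sub_eq_zero]
      rcases hv with ⟨hvP, hvc⟩ | ⟨hvQ, hvc⟩ | hvc | hvc
      · -- v ∈ Pm, commutes with Qm
        have L : τ (qᴴ * pᴴ * v) = τ ((v * pᴴ) * e) :=
          calc τ (qᴴ * pᴴ * v) = τ ((pᴴ * v) * qᴴ) := by
                rw [mul_assoc]; exact htr _ _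
            _ = τ ((pᴴ * v) * e) := hEP.replace (mul_mem hpH hvP) qᴴ
            _ = τ (pᴴ * (e * v)) := by rw [mul_assoc, hvc e heQm]
            _ = τ ((e * v) * pᴴ) := htr _ _
            _ = τ ((v * pᴴ) * e) := by rw [mul_assoc]; exact htr _ _
        have R : τ (pᴴ * qᴴ * v) = τ ((v * pᴴ) * e) :=
          calc τ (pᴴ * qᴴ * v) = τ (v * (pᴴ * qᴴ)) := htr _ _
            _ = τ ((v * pᴴ) * qᴴ) := by rw [← mul_assoc]
            _ = τ ((v * pᴴ) * e) := hEP.replace (mul_mem hvP hpH) qᴴ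
        rw [L, R]
      · -- v ∈ Q0, commutes with Qm
        have L : τ (qᴴ * pᴴ * v) = τ ((v * qᴴ) * f) :=
          calc τ (qᴴ * pᴴ * v) = τ ((pᴴ * v) * qᴴ) := by
                rw [mul_assoc]; exact htr _ _
            _ = τ (pᴴ * (v * qᴴ)) := by rw [mul_assoc]
            _ = τ ((v * qᴴ) * pᴴ) := htr _ _
            _ = τ ((v * qᴴ) * f) := hEQ0.replace (mul_mem hvQ hqH) pᴴ
        have R : τ (pᴴ * qᴴ * v) = τ ((v * qᴴ) * f) :=
          calc τ (pᴴ * qᴴ * v) = τ ((qᴴ * v) * pᴴ) := by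
                rw [mul_assoc]; exact htr _ _
            _ = τ ((qᴴ * v) * f) := hEQ0.replace (mul_mem hqH hvQ) pᴴ
            _ = τ (qᴴ * (f * v)) := by rw [mul_assoc, hvc f hfQm]
            _ = τ ((f * v) * qᴴ) := htr _ _
            _ = τ ((v * qᴴ) * f) := by rw [mul_assoc]; exact htr _ _
        rw [L, R]
      · -- v commutes with Pm
        calc τ (qᴴ * pᴴ * v) = τ (qᴴ * (v * pᴴ)) := by rw [mul_assoc, hvc pᴴ hpH]
          _ = τ (pᴴ * (qᴴ * v)) := by rw [← mul_assoc, htr, ← mul_assoc]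
          _ = τ (pᴴ * qᴴ * v) := by rw [mul_assoc]
      · -- v commutes with Q0
        calc τ (qᴴ * pᴴ * v) = τ ((pᴴ * v) * qᴴ) := by rw [mul_assoc]; exact htr _ _
          _ = τ (pᴴ * (v * qᴴ)) := by rw [mul_assoc]
          _ = τ (pᴴ * qᴴ * v) := by rw [hvc qᴴ hqH, mul_assoc]
    have k1 := key v₁ (Or.inl hv₁)
    have k2 := key v₂ (Or.inr (Or.inl hv₂))
    have k3 := key v₃ (Or.inr (Or.inr (Or.inl hv₃)))
    have k4 := key v₄ (Or.inr (Or.inr (Or.inr hv₄)))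
    rw [mul_add, mul_add, mul_add, map_add, map_add, map_add, k1, k2, k3, k4]
    ring
  | zero => simp
  | add x y hx hy ihx ihy =>
    rw [Matrix.conjTranspose_add, add_mul, map_add, ihx, ihy, add_zero]
  | smul c x hx ih =>
    rw [Matrix.conjTranspose_smul, Matrix.smul_mul, LinearMap.map_smul, ih, smul_zero]
end

section
/- Let (Q₋₁ ⊆ P₋₁ ⊆ P₀, Q₋₁ ⊆ Q₀ ⊆ P₀, τ) be a commuting square and suppose p₀ ∈ Q₋₁' ∩ P₋₁ and q₀ ∈ Q₋₁' ∩ Q₀ are hermitian elements with p₀q₀ = q₀p₀. Then for every t ∈ ℝ, setting U_t = exp(i t p₀ q₀), the quadruple (Q₋₁ ⊆ P₋₁ ⊆ P₀, Q₋₁ ⊆ U_t* Q₀ U_t ⊆ P₀, τ) is again a commuting square; equivalently, τ(p · U_t* q U_t) = τ(p q) for all p ∈ P₋₁ with E_{Q₋₁}(p) = 0 and all q ∈ Q₀. -/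
/-! Expand `U = exp(i t p₀ q₀)` and `U*` into power series in `x = p₀ q₀`. The trace
`τ(p xᵏ q xˡ) = τ(p₀ˡ p p₀ᵏ · q₀ᵏ q q₀ˡ)` depends only on `k + l`: by the commuting square,
`τ(a b) = τ(E_{Q₋₁} a · E_{Q₋₁} b)` for `a ∈ P₋₁`, `b ∈ Q₀`, and for `y` commuting with `Q₋₁`
the trace property and faithfulness give `E_{Q₋₁}(yᵏ z yˡ) = E_{Q₋₁}(yᵏ⁺ˡ z)`. So the degree-`N`
part of `τ(p U* q U)` is `τ(p₀ᴺ p q₀ᴺ q)` times `∑_{k+l=N} (-it)ᵏ (it)ˡ / k! l! = (-it + it)ᴺ / N!`,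
which vanishes unless `N = 0`. -/

open Matrix

section CondExp

variable {n : ℕ} {τ : Matrix (Fin n) (Fin n) ℂ →ₗ[ℂ] ℂ}
  {B : StarSubalgebra ℂ (Matrix (Fin n) (Fin n) ℂ)}
  {E : Matrix (Fin n) (Fin n) ℂ →ₗ[ℂ] Matrix (Fin n) (Fin n) ℂ}

theorem IsCondExp.trace_mul_apply (hE : IsCondExp τ B E) {c : Matrix (Fin n) (Fin n) ℂ}
    (hc : c ∈ B) (x : Matrix (Fin n) (Fin n) ℂ) : τ (c * E x) = τ (c * x) := by
  have h := hE.2.2 x cᴴ (star_mem hc)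
  rwa [conjTranspose_conjTranspose, mul_sub, map_sub, sub_eq_zero, eq_comm] at h

theorem eq_of_forall_trace_mul_eq (hfaith : ∀ x, τ (xᴴ * x) = 0 → x = 0)
    {u v : Matrix (Fin n) (Fin n) ℂ} (hu : u ∈ B) (hv : v ∈ B)
    (h : ∀ c ∈ B, τ (c * u) = τ (c * v)) : u = v := by
  refine sub_eq_zero.mp (hfaith _ ?_)
  rw [mul_sub, map_sub, h (u - v)ᴴ (star_mem (sub_mem hu hv)), sub_self]

theorem IsCondExp.apply_pow_mul_mul_pow (hE : IsCondExp τ B E)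
    (htr : ∀ x y, τ (x * y) = τ (y * x)) (hfaith : ∀ x, τ (xᴴ * x) = 0 → x = 0)
    {x : Matrix (Fin n) (Fin n) ℂ} (hx : ∀ c ∈ B, x * c = c * x)
    (y : Matrix (Fin n) (Fin n) ℂ) (k l : ℕ) : E (x ^ k * y * x ^ l) = E (x ^ (k + l) * y) := by
  refine eq_of_forall_trace_mul_eq hfaith (hE.1 _) (hE.1 _) fun c hc => ?_
  have hxc : x ^ l * c = c * x ^ l := (Commute.pow_left (hx c hc) l).eq
  calc τ (c * E (x ^ k * y * x ^ l)) = τ (x ^ l * (c * (x ^ k * y))) := by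
        rw [hE.trace_mul_apply hc, ← mul_assoc, htr]
    _ = τ (c * E (x ^ (k + l) * y)) := by
        rw [hE.trace_mul_apply hc, ← mul_assoc, hxc, add_comm, pow_add]
        simp only [mul_assoc]

variable {Qm Pm Q0 : StarSubalgebra ℂ (Matrix (Fin n) (Fin n) ℂ)}
  {EPm EQ0 EQm : Matrix (Fin n) (Fin n) ℂ →ₗ[ℂ] Matrix (Fin n) (Fin n) ℂ}

theorem trace_mul_eq_trace_condExp_mul_condExp (htr : ∀ x y, τ (x * y) = τ (y * x))
    (hEP : IsCondExp τ Pm EPm) (hEQ0 : IsCondExp τ Q0 EQ0) (hEQm : IsCondExp τ Qm EQm)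
    (hcs : ∀ x, EPm (EQ0 x) = EQm x) {a b : Matrix (Fin n) (Fin n) ℂ} (ha : a ∈ Pm)
    (hb : b ∈ Q0) : τ (a * b) = τ (EQm a * EQm b) :=
  calc τ (a * b) = τ (a * EQm b) := by rw [← hEP.trace_mul_apply ha, ← hcs, hEQ0.2.1 b hb]
    _ = τ (EQm b * EQm a) := by rw [htr, hEQm.trace_mul_apply (hEQm.1 b)]
    _ = τ (EQm a * EQm b) := htr _ _

theorem trace_mul_pow_mul_mul_pow (htr : ∀ x y, τ (x * y) = τ (y * x))
    (hfaith : ∀ x, τ (xᴴ * x) = 0 → x = 0)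
    (hEP : IsCondExp τ Pm EPm) (hEQ0 : IsCondExp τ Q0 EQ0) (hEQm : IsCondExp τ Qm EQm)
    (hcs : ∀ x, EPm (EQ0 x) = EQm x) {p₀ q₀ : Matrix (Fin n) (Fin n) ℂ}
    (hp₀P : p₀ ∈ Pm) (hp₀c : ∀ y ∈ Qm, p₀ * y = y * p₀)
    (hq₀Q : q₀ ∈ Q0) (hq₀c : ∀ y ∈ Qm, q₀ * y = y * q₀) (hcomm : Commute p₀ q₀)
    {p q : Matrix (Fin n) (Fin n) ℂ} (hp : p ∈ Pm) (hq : q ∈ Q0) (k l : ℕ) :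
    τ (p * (p₀ * q₀) ^ k * q * (p₀ * q₀) ^ l) = τ (p₀ ^ (k + l) * p * (q₀ ^ (k + l) * q)) := by
  have hsq {a b : Matrix (Fin n) (Fin n) ℂ} (ha : a ∈ Pm) (hb : b ∈ Q0) :=
    trace_mul_eq_trace_condExp_mul_condExp htr hEP hEQ0 hEQm hcs ha hb
  calc τ (p * (p₀ * q₀) ^ k * q * (p₀ * q₀) ^ l)
      = τ ((p₀ ^ l * p * p₀ ^ k) * (q₀ ^ k * q * q₀ ^ l)) := by
        rw [hcomm.mul_pow, hcomm.mul_pow, (hcomm.pow_pow l l).eq]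
        simp only [← mul_assoc]
        rw [htr]
        simp only [mul_assoc]
    _ = τ (EQm (p₀ ^ l * p * p₀ ^ k) * EQm (q₀ ^ k * q * q₀ ^ l)) :=
        hsq (mul_mem (mul_mem (pow_mem hp₀P l) hp) (pow_mem hp₀P k))
          (mul_mem (mul_mem (pow_mem hq₀Q k) hq) (pow_mem hq₀Q l))
    _ = τ (EQm (p₀ ^ (k + l) * p) * EQm (q₀ ^ (k + l) * q)) := by
        rw [hEQm.apply_pow_mul_mul_pow htr hfaith hp₀c,
          hEQm.apply_pow_mul_mul_pow htr hfaith hq₀c, add_comm l k]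
    _ = τ (p₀ ^ (k + l) * p * (q₀ ^ (k + l) * q)) :=
        (hsq (mul_mem (pow_mem hp₀P _) hp) (mul_mem (pow_mem hq₀Q _) hq)).symm

end CondExp

open Finset Nat NormedSpace

theorem sum_antidiagonal_inv_factorial_mul_pow {𝕂 : Type*} [Field 𝕂] [CharZero 𝕂] (a b : 𝕂)
    (N : ℕ) :
    ∑ kl ∈ antidiagonal N, (kl.1 ! : 𝕂)⁻¹ * a ^ kl.1 * ((kl.2 ! : 𝕂)⁻¹ * b ^ kl.2) =
      (N ! : 𝕂)⁻¹ * (a + b) ^ N := by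
  have := congrArg (PowerSeries.coeff N) (PowerSeries.exp_mul_exp_eq_exp_add a b)
  simpa [PowerSeries.coeff_mul, mul_comm, mul_left_comm] using this

section BanachAlgebra

variable {𝕂 𝔸 : Type*} [RCLike 𝕂] [NormedRing 𝔸] [NormedAlgebra 𝕂 𝔸] [CompleteSpace 𝔸]

theorem hasSum_mul_exp_mul_mul_exp (a b x y : 𝔸) :
    HasSum (fun N => ∑ kl ∈ antidiagonal N,
      a * ((kl.1 ! : 𝕂)⁻¹ • x ^ kl.1) * b * ((kl.2 ! : 𝕂)⁻¹ • y ^ kl.2))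
      (a * exp x * b * exp y) := by
  have hx := norm_expSeries_summable' (𝕂 := 𝕂) x
  have hy : Summable fun l => ‖b * ((l ! : 𝕂)⁻¹ • y ^ l)‖ :=
    ((norm_expSeries_summable' (𝕂 := 𝕂) y).mul_left ‖b‖).of_nonneg_of_le
      (fun _ => norm_nonneg _) (fun _ => norm_mul_le _ _)
  have hprod := (summable_norm_sum_mul_antidiagonal_of_summable_norm hx hy).of_norm.hasSum
  rw [← tsum_mul_tsum_eq_tsum_sum_antidiagonal_of_summable_norm hx hy,
    (exp_series_hasSum_exp' x).tsum_eq, ((exp_series_hasSum_exp' y).mul_left b).tsum_eq] at hprod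
  simpa only [mul_sum, mul_assoc] using hprod.mul_left a

theorem ContinuousLinearMap.map_mul_exp_neg_mul_mul_exp {E : Type*} [NormedAddCommGroup E]
    [NormedSpace 𝕂 E] (ℓ : 𝔸 →L[𝕂] E) {a b x : 𝔸} {g : ℕ → E}
    (h : ∀ k l, ℓ (a * x ^ k * b * x ^ l) = g (k + l)) (z : 𝕂) :
    ℓ (a * exp (-(z • x)) * b * exp (z • x)) = g 0 := by
  have hterm : ∀ N, ℓ (∑ kl ∈ antidiagonal N,
      a * ((kl.1 ! : 𝕂)⁻¹ • (-(z • x)) ^ kl.1) * b * ((kl.2 ! : 𝕂)⁻¹ • (z • x) ^ kl.2)) =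
        ((N ! : 𝕂)⁻¹ * (-z + z) ^ N) • g N := by
    intro N
    rw [← sum_antidiagonal_inv_factorial_mul_pow, sum_smul, map_sum]
    refine sum_congr rfl fun kl hkl => ?_
    rw [← mem_antidiagonal.mp hkl, ← h, ← map_smul, ← neg_smul, smul_pow, smul_pow]
    simp only [smul_mul_assoc, mul_smul_comm, smul_smul]
    rw [mul_comm ((kl.2 ! : 𝕂)⁻¹ * _)]
  have hsum := ℓ.hasSum (hasSum_mul_exp_mul_mul_exp (𝕂 := 𝕂) a b (-(z • x)) (z • x))
  simp only [hterm, neg_add_cancel] at hsum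
  refine hsum.unique ?_
  simpa using hasSum_single (f := fun N => ((N ! : 𝕂)⁻¹ * 0 ^ N) • g N) 0
    fun N hN => by simp [zero_pow hN]

end BanachAlgebra

theorem one_parameter_family_commuting_square_general {n : ℕ}
    (τ : Matrix (Fin n) (Fin n) ℂ →ₗ[ℂ] ℂ)
    (htr : ∀ x y, τ (x * y) = τ (y * x))
    (hfaith : ∀ x, τ (xᴴ * x) = 0 → x = 0)
    (Qm Pm Q0 : StarSubalgebra ℂ (Matrix (Fin n) (Fin n) ℂ))
    (EPm EQ0 EQm : Matrix (Fin n) (Fin n) ℂ →ₗ[ℂ] Matrix (Fin n) (Fin n) ℂ)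
    (hEP : IsCondExp τ Pm EPm) (hEQ0 : IsCondExp τ Q0 EQ0) (hEQm : IsCondExp τ Qm EQm)
    (hcs : ∀ x, EPm (EQ0 x) = EQm x)
    (p₀ q₀ : Matrix (Fin n) (Fin n) ℂ)
    (hp₀P : p₀ ∈ Pm) (hp₀c : ∀ y ∈ Qm, p₀ * y = y * p₀) (hp₀h : p₀ᴴ = p₀)
    (hq₀Q : q₀ ∈ Q0) (hq₀c : ∀ y ∈ Qm, q₀ * y = y * q₀) (hq₀h : q₀ᴴ = q₀)
    (hcomm : p₀ * q₀ = q₀ * p₀) :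
    ∀ t : ℝ, ∀ p ∈ Pm, EQm p = 0 → ∀ q ∈ Q0,
      τ (p * (NormedSpace.exp ((Complex.I * t) • (p₀ * q₀)))ᴴ * q *
          NormedSpace.exp ((Complex.I * t) • (p₀ * q₀))) = τ (p * q) := by
  intro t p hp _ q hq
  -- `exp` is defined topologically, so any Banach-algebra norm on matrices serves for the series.
  let _ : NormedRing (Matrix (Fin n) (Fin n) ℂ) := Matrix.linftyOpNormedRing
  let _ : NormedAlgebra ℂ (Matrix (Fin n) (Fin n) ℂ) := Matrix.linftyOpNormedAlgebra
  have hskew : ((Complex.I * t) • (p₀ * q₀))ᴴ = -((Complex.I * t) • (p₀ * q₀)) := by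
    simp [conjTranspose_smul, hp₀h, hq₀h, hcomm]
  rw [← Matrix.exp_conjTranspose, hskew]
  have h := (LinearMap.toContinuousLinearMap τ).map_mul_exp_neg_mul_mul_exp
    (g := fun N => τ (p₀ ^ N * p * (q₀ ^ N * q)))
    (trace_mul_pow_mul_mul_pow htr hfaith hEP hEQ0 hEQm hcs hp₀P hp₀c hq₀Q hq₀c hcomm hp hq)
    (Complex.I * t)
  rwa [pow_zero, pow_zero, one_mul, one_mul] at h

/-- Given a commuting square `(Q₋₁ ⊆ P₋₁ ⊆ P₀, Q₋₁ ⊆ Q₀ ⊆ P₀, τ)` in `P₀ = Mₙ(ℂ)` and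
hermitian `p₀ ∈ Q₋₁' ∩ P₋₁`, `q₀ ∈ Q₋₁' ∩ Q₀` with `p₀q₀ = q₀p₀`, for every `t ∈ ℝ` and
`U_t = exp(i t p₀ q₀)`, the deformed quadruple `(Q₋₁ ⊆ P₋₁ ⊆ P₀, Q₋₁ ⊆ U_t* Q₀ U_t ⊆ P₀, τ)`
is a commuting square; equivalently `τ(p·U_t*·q·U_t) = τ(pq)` for all `p ∈ P₋₁` with
`E_{Q₋₁}(p) = 0` and all `q ∈ Q₀`. -/
theorem one_parameter_family_commuting_square {n : ℕ}
    (τ : Matrix (Fin n) (Fin n) ℂ →ₗ[ℂ] ℂ)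
    (htr : ∀ x y, τ (x * y) = τ (y * x)) (hτ1 : τ 1 = 1)
    (hfaith : ∀ x, τ (xᴴ * x) = 0 → x = 0)
    (Qm Pm Q0 : StarSubalgebra ℂ (Matrix (Fin n) (Fin n) ℂ))
    (hQP : Qm ≤ Pm) (hQQ : Qm ≤ Q0)
    (EPm EQ0 EQm : Matrix (Fin n) (Fin n) ℂ →ₗ[ℂ] Matrix (Fin n) (Fin n) ℂ)
    (hEP : IsCondExp τ Pm EPm) (hEQ0 : IsCondExp τ Q0 EQ0) (hEQm : IsCondExp τ Qm EQm)
    (hcs : ∀ x, EPm (EQ0 x) = EQm x)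
    (p₀ q₀ : Matrix (Fin n) (Fin n) ℂ)
    (hp₀P : p₀ ∈ Pm) (hp₀c : ∀ y ∈ Qm, p₀ * y = y * p₀) (hp₀h : p₀ᴴ = p₀)
    (hq₀Q : q₀ ∈ Q0) (hq₀c : ∀ y ∈ Qm, q₀ * y = y * q₀) (hq₀h : q₀ᴴ = q₀)
    (hcomm : p₀ * q₀ = q₀ * p₀) :
    ∀ t : ℝ, ∀ p ∈ Pm, EQm p = 0 → ∀ q ∈ Q0,
      τ (p * (NormedSpace.exp ((Complex.I * t) • (p₀ * q₀)))ᴴ * q *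
          NormedSpace.exp ((Complex.I * t) • (p₀ * q₀))) = τ (p * q) :=
  one_parameter_family_commuting_square_general τ htr hfaith Qm Pm Q0 EPm EQ0 EQm hEP hEQ0 hEQm hcs
    p₀ q₀ hp₀P hp₀c hp₀h hq₀Q hq₀c hq₀h hcomm
end

section
/- Let p₁, p₂, q₁, q₂ be elements of an algebra with p₁, p₂ orthogonal projections (p_i² = p_i = p_i*, p₁p₂ = 0), q₁, q₂ orthogonal projections (q₁q₂ = 0), and suppose [p₁,q₁] = [p₂,q₂]. Then p₁q₁p₁ + p₂q₂p₂ = q₁p₁ + p₂q₂. -/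
open Matrix

/-- If `p₁, p₂` are orthogonal projections, `q₁, q₂` are orthogonal projections in `Mₙ(ℂ)`
and `[p₁,q₁] = [p₂,q₂]`, then `p₁q₁p₁ + p₂q₂p₂ = q₁p₁ + p₂q₂`. -/
theorem proj_commutator_identity {n : ℕ} (p₁ p₂ q₁ q₂ : Matrix (Fin n) (Fin n) ℂ)
    (hp₁ : p₁ * p₁ = p₁) (hp₁s : p₁ᴴ = p₁) (hp₂ : p₂ * p₂ = p₂) (hp₂s : p₂ᴴ = p₂)
    (hp : p₁ * p₂ = 0) (hp' : p₂ * p₁ = 0)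
    (hq₁ : q₁ * q₁ = q₁) (hq₁s : q₁ᴴ = q₁) (hq₂ : q₂ * q₂ = q₂) (hq₂s : q₂ᴴ = q₂)
    (hq : q₁ * q₂ = 0) (hq' : q₂ * q₁ = 0)
    (hcomm : p₁ * q₁ - q₁ * p₁ = p₂ * q₂ - q₂ * p₂) :
    p₁ * q₁ * p₁ + p₂ * q₂ * p₂ = q₁ * p₁ + p₂ * q₂ := by
  have L1 : ∀ x : Matrix (Fin n) (Fin n) ℂ, p₂ * (p₁ * x) = 0 := fun x => by
    rw [← mul_assoc, hp', zero_mul]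
  have L2 : ∀ x : Matrix (Fin n) (Fin n) ℂ, p₂ * (p₂ * x) = p₂ * x := fun x => by
    rw [← mul_assoc, hp₂]
  -- Multiply `hcomm` on the right by `p₁`
  have h1 : p₁ * (q₁ * p₁) - q₁ * p₁ = p₂ * (q₂ * p₁) := by
    have := congrArg (· * p₁) hcomm
    simpa only [sub_mul, mul_assoc, hp₁, hp', mul_zero, zero_mul, sub_zero] using this
  -- Multiply `hcomm` on the left by `p₂` and on the right by `p₁`
  have h2 : -(p₂ * (q₁ * p₁)) = p₂ * (q₂ * p₁) := by
    have := congrArg (fun x => p₂ * x * p₁) hcomm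
    simpa only [mul_sub, sub_mul, mul_assoc, hp₁, hp₂, hp, hp', L1, L2,
      mul_zero, zero_mul, sub_zero, zero_sub, neg_mul] using this
  -- Multiply `hcomm` on the left by `p₂`
  have h3 : -(p₂ * (q₁ * p₁)) = p₂ * q₂ - p₂ * (q₂ * p₂) := by
    have := congrArg (fun x => p₂ * x) hcomm
    simpa only [mul_sub, mul_assoc, L1, L2, zero_sub] using this
  have key : p₁ * (q₁ * p₁) - q₁ * p₁ = p₂ * q₂ - p₂ * (q₂ * p₂) := by
    rw [h1, ← h2, h3]
  simp only [mul_assoc]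
  rw [sub_eq_sub_iff_add_eq_add.mp key, add_comm]
end

section
/- Let p₁, p₂ be orthogonal projections and q₁, q₂ be orthogonal projections in M_n(ℂ) with [p₁,q₁] − [p₂,q₂] = 0. Then for every λ ∈ ℂ with |λ| = 1, the matrix U(λ) = I + (λ−1)p₁q₁ + (λ̄−1)p₂q₂ is unitary. -/
/-!
With `a = p₁q₁`, `b = p₂q₂` and `μ = λ - 1`, we have `a b* = b a* = 0`, and `|λ| = 1` gives
`μ μ̄ = -μ - μ̄`, so `U U* = 1` reduces to the two identities `a a* + b b* = a* + b` and
`a - a* = b - b*`. The second is the commutator hypothesis; the first is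
`p₁q₁p₁ + p₂q₂p₂ = q₁p₁ + p₂q₂`, which follows from `E x₁ = x₂ E x₁ = x₂ E` for the common
commutator `E = [p₁,q₁] = [p₂,q₂]`. A one-sided inverse of a square matrix is two-sided.
-/

open Matrix

theorem IsIdempotentElem.mul_mul_add_mul_mul_eq_of_lie_eq {R : Type*} [Ring R]
    {x₁ x₂ y₁ y₂ : R} (hx₁ : IsIdempotentElem x₁) (hx₂ : IsIdempotentElem x₂)
    (hx : x₂ * x₁ = 0) (h : ⁅x₁, y₁⁆ = ⁅x₂, y₂⁆) :
    x₁ * y₁ * x₁ + x₂ * y₂ * x₂ = y₁ * x₁ + x₂ * y₂ := by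
  rw [Ring.lie_def, Ring.lie_def] at h
  set e := x₁ * y₁ - y₁ * x₁ with he
  have right : e * x₁ = x₁ * y₁ * x₁ - y₁ * x₁ := by
    rw [he, sub_mul, mul_assoc y₁, hx₁.eq]
  have left : x₂ * e = x₂ * y₂ - x₂ * y₂ * x₂ := by
    rw [h, mul_sub, ← mul_assoc, hx₂.eq, mul_assoc]
  have : e * x₁ = x₂ * e :=
    calc e * x₁ = x₂ * e * x₁ := by
          simp only [h, mul_sub, sub_mul, mul_assoc, hx, mul_zero, sub_zero]
          rw [← mul_assoc x₂ x₂, hx₂.eq]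
      _ = -(x₂ * y₁ * x₁) := by
          rw [he, mul_sub, sub_mul, ← mul_assoc x₂ x₁, hx, zero_mul, zero_mul, zero_sub]
          simp only [mul_assoc, hx₁.eq]
      _ = x₂ * e := by rw [he, mul_sub, ← mul_assoc, hx, zero_mul, zero_sub, mul_assoc]
  rw [right, left] at this
  linear_combination (norm := abel) this

section Deformation

variable {R A : Type*} [CommRing R] [StarRing R] [Ring A] [StarRing A] [Algebra R A]
  [StarModule R A]

def deformation (z : R) (a b : A) : A := 1 + (z - 1) • a + (star z - 1) • b

theorem deformation_mul_star_self_eq_one {z : R} (hz : star z * z = 1) {a b : A}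
    (hab : a * star b = 0) (hba : b * star a = 0) (hsq : a * star a + b * star b = star a + b)
    (hskew : a - star a = b - star b) :
    deformation z a b * star (deformation z a b) = 1 := by
  have hz' : (z - 1) * (star z - 1) = -(z - 1) - (star z - 1) := by linear_combination hz
  simp only [deformation, star_add, star_one, star_smul, star_sub, star_star, add_mul, mul_add,
    one_mul, mul_one, smul_mul_smul, hab, hba, smul_zero]
  linear_combination (norm := module) hz' • (a * star a + b * star b) +
    (-(z - 1) - (star z - 1)) • hsq + (z - 1) • hskew

theorem deformation_mul_mul_star_self_eq_one_of_lie_eq {z : R} (hz : star z * z = 1)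
    {p₁ p₂ q₁ q₂ : A} (hp₁ : IsStarProjection p₁) (hp₂ : IsStarProjection p₂)
    (hq₁ : IsStarProjection q₁) (hq₂ : IsStarProjection q₂) (hp : p₂ * p₁ = 0)
    (hq : q₁ * q₂ = 0) (hq' : q₂ * q₁ = 0) (h : ⁅p₁, q₁⁆ = ⁅p₂, q₂⁆) :
    deformation z (p₁ * q₁) (p₂ * q₂) * star (deformation z (p₁ * q₁) (p₂ * q₂)) = 1 := by
  have star_mul_eq {p q : A} (hp : IsStarProjection p) (hq : IsStarProjection q) :
      star (p * q) = q * p := by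
    rw [star_mul, hp.isSelfAdjoint.star_eq, hq.isSelfAdjoint.star_eq]
  refine deformation_mul_star_self_eq_one hz ?_ ?_ ?_ ?_ <;>
    simp only [star_mul_eq hp₁ hq₁, star_mul_eq hp₂ hq₂]
  · rw [mul_assoc, ← mul_assoc q₁, hq, zero_mul, mul_zero]
  · rw [mul_assoc, ← mul_assoc q₂, hq', zero_mul, mul_zero]
  · rw [mul_assoc, ← mul_assoc q₁, hq₁.isIdempotentElem.eq, ← mul_assoc,
      mul_assoc p₂, ← mul_assoc q₂, hq₂.isIdempotentElem.eq, ← mul_assoc]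
    exact hp₁.isIdempotentElem.mul_mul_add_mul_mul_eq_of_lie_eq hp₂.isIdempotentElem hp h
  · simpa only [Ring.lie_def] using h

end Deformation

theorem deformation_unitary_general {n : ℕ} (p₁ p₂ q₁ q₂ : Matrix (Fin n) (Fin n) ℂ)
    (hp₁ : p₁ * p₁ = p₁) (hp₁s : p₁ᴴ = p₁) (hp₂ : p₂ * p₂ = p₂) (hp₂s : p₂ᴴ = p₂)
    (hp' : p₂ * p₁ = 0)
    (hq₁ : q₁ * q₁ = q₁) (hq₁s : q₁ᴴ = q₁) (hq₂ : q₂ * q₂ = q₂) (hq₂s : q₂ᴴ = q₂)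
    (hq : q₁ * q₂ = 0) (hq' : q₂ * q₁ = 0)
    (hcomm : (p₁ * q₁ - q₁ * p₁) - (p₂ * q₂ - q₂ * p₂) = 0)
    (lam : ℂ) (hlam : ‖lam‖ = 1) :
    (1 + (lam - 1) • (p₁ * q₁) + ((starRingEnd ℂ) lam - 1) • (p₂ * q₂)) *
        (1 + (lam - 1) • (p₁ * q₁) + ((starRingEnd ℂ) lam - 1) • (p₂ * q₂))ᴴ = 1 ∧
      (1 + (lam - 1) • (p₁ * q₁) + ((starRingEnd ℂ) lam - 1) • (p₂ * q₂))ᴴ *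
        (1 + (lam - 1) • (p₁ * q₁) + ((starRingEnd ℂ) lam - 1) • (p₂ * q₂)) = 1 := by
  have hlam' : star lam * lam = 1 := by simpa [hlam] using Complex.conj_mul' lam
  have hlie : ⁅p₁, q₁⁆ = ⁅p₂, q₂⁆ := by simpa only [Ring.lie_def] using sub_eq_zero.mp hcomm
  have hU : deformation lam (p₁ * q₁) (p₂ * q₂) * star (deformation lam (p₁ * q₁) (p₂ * q₂)) = 1 :=
    deformation_mul_mul_star_self_eq_one_of_lie_eq hlam' ⟨hp₁, hp₁s⟩ ⟨hp₂, hp₂s⟩ ⟨hq₁, hq₁s⟩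
      ⟨hq₂, hq₂s⟩ hp' hq hq' hlie
  exact ⟨hU, mul_eq_one_comm.mp hU⟩

/-- If `p₁, p₂` are orthogonal projections, `q₁, q₂` are orthogonal projections in `Mₙ(ℂ)`,
`[p₁,q₁] - [p₂,q₂] = 0`, and `|λ| = 1`, then
`U(λ) = I + (λ-1)p₁q₁ + (conj λ - 1)p₂q₂` is unitary. -/
theorem deformation_unitary {n : ℕ} (p₁ p₂ q₁ q₂ : Matrix (Fin n) (Fin n) ℂ)
    (hp₁ : p₁ * p₁ = p₁) (hp₁s : p₁ᴴ = p₁) (hp₂ : p₂ * p₂ = p₂) (hp₂s : p₂ᴴ = p₂)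
    (hp : p₁ * p₂ = 0) (hp' : p₂ * p₁ = 0)
    (hq₁ : q₁ * q₁ = q₁) (hq₁s : q₁ᴴ = q₁) (hq₂ : q₂ * q₂ = q₂) (hq₂s : q₂ᴴ = q₂)
    (hq : q₁ * q₂ = 0) (hq' : q₂ * q₁ = 0)
    (hcomm : (p₁ * q₁ - q₁ * p₁) - (p₂ * q₂ - q₂ * p₂) = 0)
    (lam : ℂ) (hlam : ‖lam‖ = 1) :
    (1 + (lam - 1) • (p₁ * q₁) + ((starRingEnd ℂ) lam - 1) • (p₂ * q₂)) *
        (1 + (lam - 1) • (p₁ * q₁) + ((starRingEnd ℂ) lam - 1) • (p₂ * q₂))ᴴ = 1 ∧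
      (1 + (lam - 1) • (p₁ * q₁) + ((starRingEnd ℂ) lam - 1) • (p₂ * q₂))ᴴ *
        (1 + (lam - 1) • (p₁ * q₁) + ((starRingEnd ℂ) lam - 1) • (p₂ * q₂)) = 1 :=
  deformation_unitary_general p₁ p₂ q₁ q₂ hp₁ hp₁s hp₂ hp₂s hp' hq₁ hq₁s hq₂ hq₂s hq hq' hcomm lam
    hlam
end

section
/- Let (Q₋₁ ⊆ P₋₁ ⊆ P₀, Q₋₁ ⊆ Q₀ ⊆ P₀, τ) be a commuting square, and let p₁, p₂ ∈ Q₋₁' ∩ P₋₁ be orthogonal projections and q₁, q₂ ∈ Q₋₁' ∩ Q₀ be orthogonal projections with [p₁,q₁] = [p₂,q₂]. For λ ∈ ℂ with |λ| = 1 set U(λ) = I + (λ−1)p₁q₁ + (λ̄−1)p₂q₂. Then for all p ∈ P₋₁ with E_{Q₋₁}(p) = 0 and all q ∈ Q₀, one has τ(p · U(λ) q U(λ)*) = 0; i.e., (Q₋₁ ⊆ P₋₁ ⊆ P₀, Q₋₁ ⊆ U(λ)* Q₀ U(λ) ⊆ P₀, τ) is a commuting square for every λ. -/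
open Matrix

/-!
Write `E = E_{Q₋₁}` and `U = 1 + α p₁q₁ + β p₂q₂`. By the commuting square condition,
`τ(y x) = τ(y E(x))` for `y ∈ P₋₁`, `x ∈ Q₀`; since `pᵢ` commutes with `E(x) ∈ Q₋₁`, every term
`τ(p · pᵢ x q y · pⱼ)` of the expansion of `τ(p U q U*)` equals `τ(pᵢ pⱼ p E(x q y))`. Hence the
cross terms vanish (`p₁p₂ = 0`), `τ(pq) = τ(p E(q)) = 0`, and the four terms belonging to `pᵢ, qᵢ`
all equal `dᵢ = τ(pᵢ p E(qᵢ q))`, because faithfulness of `τ` gives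
`E(qᵢ z) = E(z qᵢ)` for `qᵢ ∈ Q₋₁'`. So
`τ(p U q U*) = (α + ᾱ + |α|²) d₁ + (β + β̄ + |β|²) d₂`, and both coefficients are
`|1 + α|² - 1 = |λ|² - 1 = 0`.
-/

open ComplexConjugate

/-- An orthogonal projection in the relative commutant `B' ∩ A`. -/
structure IsProjRelCommutant {n : ℕ} (B A : StarSubalgebra ℂ (Matrix (Fin n) (Fin n) ℂ))
    (e : Matrix (Fin n) (Fin n) ℂ) : Prop where
  mem : e ∈ A
  commute : ∀ y ∈ B, e * y = y * e
  idem : e * e = e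
  conjTranspose_eq : eᴴ = e

theorem add_conj_add_mul_conj_eq_zero {α : ℂ} (hα : ‖1 + α‖ = 1) :
    α + conj α + α * conj α = 0 := by
  have h : (1 + α) * conj (1 + α) = 1 := by
    rw [Complex.mul_conj, Complex.normSq_eq_norm_sq, hα]
    norm_num
  rw [map_add, map_one] at h
  linear_combination h

namespace IsCondExp

variable {n : ℕ} {τ : Matrix (Fin n) (Fin n) ℂ →ₗ[ℂ] ℂ}
  {B : StarSubalgebra ℂ (Matrix (Fin n) (Fin n) ℂ)}
  {E : Matrix (Fin n) (Fin n) ℂ →ₗ[ℂ] Matrix (Fin n) (Fin n) ℂ}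

theorem trace_mul_apply_s15 (hE : IsCondExp τ B E) {b : Matrix (Fin n) (Fin n) ℂ} (hb : b ∈ B)
    (x : Matrix (Fin n) (Fin n) ℂ) : τ (b * E x) = τ (b * x) := by
  have h := hE.2.2 x bᴴ (star_mem hb)
  rw [conjTranspose_conjTranspose, mul_sub, map_sub, sub_eq_zero] at h
  exact h.symm

theorem trace_mul_eq_zero (htr : ∀ x y, τ (x * y) = τ (y * x)) (hE : IsCondExp τ B E)
    {p : Matrix (Fin n) (Fin n) ℂ} (hp : E p = 0) {d : Matrix (Fin n) (Fin n) ℂ} (hd : d ∈ B) :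
    τ (p * d) = 0 := by
  rw [htr, ← hE.trace_mul_apply_s15 hd, hp, mul_zero, map_zero]

theorem apply_mul_comm (htr : ∀ x y, τ (x * y) = τ (y * x))
    (hfaith : ∀ x, τ (xᴴ * x) = 0 → x = 0) (hE : IsCondExp τ B E)
    {w : Matrix (Fin n) (Fin n) ℂ} (hw : ∀ y ∈ B, w * y = y * w) (z : Matrix (Fin n) (Fin n) ℂ) :
    E (w * z) = E (z * w) := by
  set e := E (w * z) - E (z * w)
  have he : eᴴ ∈ B := star_mem (sub_mem (hE.1 _) (hE.1 _))
  refine sub_eq_zero.mp (hfaith e ?_)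
  calc τ (eᴴ * e) = τ (eᴴ * (w * z)) - τ (eᴴ * (z * w)) := by
        rw [mul_sub, map_sub, hE.trace_mul_apply_s15 he, hE.trace_mul_apply_s15 he]
    _ = τ (w * (eᴴ * z)) - τ (eᴴ * (z * w)) := by rw [← mul_assoc, ← hw _ he, mul_assoc]
    _ = 0 := by rw [htr, mul_assoc, sub_self]

theorem trace_mul_eq_of_commSq {P Q : StarSubalgebra ℂ (Matrix (Fin n) (Fin n) ℂ)}
    {EP EQ EQ' : Matrix (Fin n) (Fin n) ℂ →ₗ[ℂ] Matrix (Fin n) (Fin n) ℂ}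
    (hEP : IsCondExp τ P EP) (hEQ : ∀ b ∈ Q, EQ b = b) (hcs : ∀ x, EP (EQ x) = EQ' x)
    {y x : Matrix (Fin n) (Fin n) ℂ} (hy : y ∈ P) (hx : x ∈ Q) :
    τ (y * x) = τ (y * EQ' x) := by
  rw [← hEP.trace_mul_apply_s15 hy, ← hcs, hEQ x hx]

end IsCondExp

section Deformation

variable {n : ℕ} {τ : Matrix (Fin n) (Fin n) ℂ →ₗ[ℂ] ℂ}
  {Qm Pm Q0 : StarSubalgebra ℂ (Matrix (Fin n) (Fin n) ℂ)}
  {E : Matrix (Fin n) (Fin n) ℂ →ₗ[ℂ] Matrix (Fin n) (Fin n) ℂ}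
  {p q : Matrix (Fin n) (Fin n) ℂ}

theorem trace_mul_sandwich (htr : ∀ x y, τ (x * y) = τ (y * x)) (hEm : ∀ x, E x ∈ Qm)
    (hsq : ∀ y ∈ Pm, ∀ x ∈ Q0, τ (y * x) = τ (y * E x)) (hp : p ∈ Pm)
    {a b z : Matrix (Fin n) (Fin n) ℂ} (ha : a ∈ Pm) (hac : ∀ y ∈ Qm, a * y = y * a)
    (hb : b ∈ Pm) (hz : z ∈ Q0) :
    τ (p * (a * z * b)) = τ (a * b * p * E z) :=
  calc τ (p * (a * z * b)) = τ (b * p * a * z) := by rw [← mul_assoc, htr]; simp only [mul_assoc]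
    _ = τ (b * p * a * E z) := hsq _ (mul_mem (mul_mem hb hp) ha) _ hz
    _ = τ (b * p * E z * a) := by rw [mul_assoc (b * p), hac _ (hEm z), ← mul_assoc]
    _ = τ (a * b * p * E z) := by rw [htr]; simp only [mul_assoc]

theorem trace_mul_projRelCommutant (htr : ∀ x y, τ (x * y) = τ (y * x))
    (hfaith : ∀ x, τ (xᴴ * x) = 0 → x = 0) (hE : IsCondExp τ Qm E)
    (hsq : ∀ y ∈ Pm, ∀ x ∈ Q0, τ (y * x) = τ (y * E x)) (hp : p ∈ Pm) (hq : q ∈ Q0)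
    {a x : Matrix (Fin n) (Fin n) ℂ} (ha : IsProjRelCommutant Qm Pm a)
    (hx : IsProjRelCommutant Qm Q0 x) :
    τ (p * (a * x * q)) = τ (a * p * E (x * q)) ∧
      τ (p * (q * (x * a))) = τ (a * p * E (x * q)) ∧
      τ (p * (a * x * q * (x * a))) = τ (a * p * E (x * q)) := by
  have hswap := hE.apply_mul_comm htr hfaith hx.commute
  have one_comm : ∀ y ∈ Qm, 1 * y = y * 1 := fun y _ => by rw [one_mul, mul_one]
  refine ⟨?_, ?_, ?_⟩
  · simpa [mul_assoc] using
      trace_mul_sandwich htr hE.1 hsq hp ha.mem ha.commute (one_mem _) (mul_mem hx.mem hq)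
  · have h := trace_mul_sandwich htr hE.1 hsq hp (one_mem _) one_comm ha.mem (mul_mem hq hx.mem)
    rw [← hswap] at h
    simpa [mul_assoc] using h
  · have h := trace_mul_sandwich htr hE.1 hsq hp ha.mem ha.commute ha.mem
      (mul_mem (mul_mem hx.mem hq) hx.mem)
    rw [ha.idem, mul_assoc x, hswap, mul_assoc q, hx.idem, ← hswap] at h
    simpa [mul_assoc] using h

theorem trace_mul_deformation_eq_zero (htr : ∀ x y, τ (x * y) = τ (y * x))
    (hfaith : ∀ x, τ (xᴴ * x) = 0 → x = 0) (hE : IsCondExp τ Qm E)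
    (hsq : ∀ y ∈ Pm, ∀ x ∈ Q0, τ (y * x) = τ (y * E x)) (hp : p ∈ Pm) (hEp : E p = 0)
    (hq : q ∈ Q0) {p₁ p₂ q₁ q₂ : Matrix (Fin n) (Fin n) ℂ}
    (hp₁ : IsProjRelCommutant Qm Pm p₁) (hp₂ : IsProjRelCommutant Qm Pm p₂)
    (hq₁ : IsProjRelCommutant Qm Q0 q₁) (hq₂ : IsProjRelCommutant Qm Q0 q₂)
    (hporth : p₁ * p₂ = 0) {α β : ℂ} (hα : ‖1 + α‖ = 1) (hβ : ‖1 + β‖ = 1) :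
    τ (p * ((1 + α • (p₁ * q₁) + β • (p₂ * q₂)) * q *
      (1 + α • (p₁ * q₁) + β • (p₂ * q₂))ᴴ)) = 0 := by
  have hporth' : p₂ * p₁ = 0 := by
    simpa [hp₁.conjTranspose_eq, hp₂.conjTranspose_eq] using congrArg conjTranspose hporth
  have cross : ∀ {a b x y}, a ∈ Pm → (∀ y ∈ Qm, a * y = y * a) → b ∈ Pm → a * b = 0 →
      x ∈ Q0 → y ∈ Q0 → τ (p * (a * x * q * (y * b))) = 0 := by
    intro a b x y ha hac hb hab hx hy
    have h := trace_mul_sandwich htr hE.1 hsq hp ha hac hb (mul_mem (mul_mem hx hq) hy)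
    rw [hab, zero_mul, zero_mul, map_zero] at h
    simpa [mul_assoc] using h
  have hpq : τ (p * q) = 0 := by
    rw [hsq p hp q hq, hE.trace_mul_eq_zero htr hEp (hE.1 q)]
  have hUstar : (1 + α • (p₁ * q₁) + β • (p₂ * q₂))ᴴ
      = 1 + conj α • (q₁ * p₁) + conj β • (q₂ * p₂) := by
    simp [hp₁.conjTranspose_eq, hp₂.conjTranspose_eq, hq₁.conjTranspose_eq,
      hq₂.conjTranspose_eq]
  obtain ⟨h₁, h₁', h₁''⟩ := trace_mul_projRelCommutant htr hfaith hE hsq hp hq hp₁ hq₁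
  obtain ⟨h₂, h₂', h₂''⟩ := trace_mul_projRelCommutant htr hfaith hE hsq hp hq hp₂ hq₂
  have expand : τ (p * ((1 + α • (p₁ * q₁) + β • (p₂ * q₂)) * q *
      (1 + conj α • (q₁ * p₁) + conj β • (q₂ * p₂)))) =
      τ (p * q) + α * τ (p * (p₁ * q₁ * q)) + β * τ (p * (p₂ * q₂ * q))
      + conj α * τ (p * (q * (q₁ * p₁))) + conj β * τ (p * (q * (q₂ * p₂)))
      + α * conj α * τ (p * (p₁ * q₁ * q * (q₁ * p₁)))
      + α * conj β * τ (p * (p₁ * q₁ * q * (q₂ * p₂)))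
      + β * conj α * τ (p * (p₂ * q₂ * q * (q₁ * p₁)))
      + β * conj β * τ (p * (p₂ * q₂ * q * (q₂ * p₂))) := by
    simp only [add_mul, mul_add, smul_mul_assoc, mul_smul_comm, map_add, map_smul,
      smul_eq_mul, one_mul, mul_one, mul_assoc]
    ring
  rw [hUstar, expand, hpq, h₁, h₁', h₁'', h₂, h₂', h₂'',
    cross hp₁.mem hp₁.commute hp₂.mem hporth hq₁.mem hq₂.mem,
    cross hp₂.mem hp₂.commute hp₁.mem hporth' hq₂.mem hq₁.mem]
  linear_combination τ (p₁ * p * E (q₁ * q)) * add_conj_add_mul_conj_eq_zero hα +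
    τ (p₂ * p * E (q₂ * q)) * add_conj_add_mul_conj_eq_zero hβ

end Deformation

theorem petrescu_deformation_commuting_square_general {n : ℕ}
    (τ : Matrix (Fin n) (Fin n) ℂ →ₗ[ℂ] ℂ)
    (htr : ∀ x y, τ (x * y) = τ (y * x))
    (hfaith : ∀ x, τ (xᴴ * x) = 0 → x = 0)
    (Qm Pm Q0 : StarSubalgebra ℂ (Matrix (Fin n) (Fin n) ℂ))
    (EPm EQ0 EQm : Matrix (Fin n) (Fin n) ℂ →ₗ[ℂ] Matrix (Fin n) (Fin n) ℂ)
    (hEP : IsCondExp τ Pm EPm) (hEQ0 : IsCondExp τ Q0 EQ0) (hEQm : IsCondExp τ Qm EQm)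
    (hcs : ∀ x, EPm (EQ0 x) = EQm x)
    (p₁ p₂ q₁ q₂ : Matrix (Fin n) (Fin n) ℂ)
    (hp₁P : p₁ ∈ Pm) (hp₂P : p₂ ∈ Pm)
    (hp₁c : ∀ y ∈ Qm, p₁ * y = y * p₁) (hp₂c : ∀ y ∈ Qm, p₂ * y = y * p₂)
    (hq₁Q : q₁ ∈ Q0) (hq₂Q : q₂ ∈ Q0)
    (hq₁c : ∀ y ∈ Qm, q₁ * y = y * q₁) (hq₂c : ∀ y ∈ Qm, q₂ * y = y * q₂)
    (hp₁ : p₁ * p₁ = p₁) (hp₁s : p₁ᴴ = p₁) (hp₂ : p₂ * p₂ = p₂) (hp₂s : p₂ᴴ = p₂)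
    (hporth : p₁ * p₂ = 0)
    (hq₁ : q₁ * q₁ = q₁) (hq₁s : q₁ᴴ = q₁) (hq₂ : q₂ * q₂ = q₂) (hq₂s : q₂ᴴ = q₂)
    (lam : ℂ) (hlam : ‖lam‖ = 1) :
    ∀ p ∈ Pm, EQm p = 0 → ∀ q ∈ Q0,
      τ (p * ((1 + (lam - 1) • (p₁ * q₁) + ((starRingEnd ℂ) lam - 1) • (p₂ * q₂)) * q *
          (1 + (lam - 1) • (p₁ * q₁) + ((starRingEnd ℂ) lam - 1) • (p₂ * q₂))ᴴ)) = 0 := by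
  intro p hp hEp q hq
  have hsq : ∀ y ∈ Pm, ∀ x ∈ Q0, τ (y * x) = τ (y * EQm x) := fun y hy x hx =>
    hEP.trace_mul_eq_of_commSq hEQ0.2.1 hcs hy hx
  exact trace_mul_deformation_eq_zero htr hfaith hEQm hsq hp hEp hq
    ⟨hp₁P, hp₁c, hp₁, hp₁s⟩ ⟨hp₂P, hp₂c, hp₂, hp₂s⟩ ⟨hq₁Q, hq₁c, hq₁, hq₁s⟩ ⟨hq₂Q, hq₂c, hq₂, hq₂s⟩
    hporth (by simpa using hlam) (by simpa using hlam)

/-- Given a commuting square `(Q₋₁ ⊆ P₋₁ ⊆ P₀, Q₋₁ ⊆ Q₀ ⊆ P₀, τ)` in `P₀ = Mₙ(ℂ)`,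
orthogonal projections `p₁, p₂ ∈ Q₋₁' ∩ P₋₁` and `q₁, q₂ ∈ Q₋₁' ∩ Q₀` with
`[p₁,q₁] = [p₂,q₂]`, and `|λ| = 1`, set `U(λ) = I + (λ−1)p₁q₁ + (conj λ −1)p₂q₂`. Then
`τ(p·U(λ)·q·U(λ)*) = 0` for all `p ∈ P₋₁` with `E_{Q₋₁}(p) = 0` and all `q ∈ Q₀`; i.e.
`(Q₋₁ ⊆ P₋₁ ⊆ P₀, Q₋₁ ⊆ U(λ)* Q₀ U(λ) ⊆ P₀, τ)` is a commuting square for every `λ`. -/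
theorem petrescu_deformation_commuting_square {n : ℕ}
    (τ : Matrix (Fin n) (Fin n) ℂ →ₗ[ℂ] ℂ)
    (htr : ∀ x y, τ (x * y) = τ (y * x)) (hτ1 : τ 1 = 1)
    (hfaith : ∀ x, τ (xᴴ * x) = 0 → x = 0)
    (Qm Pm Q0 : StarSubalgebra ℂ (Matrix (Fin n) (Fin n) ℂ))
    (hQP : Qm ≤ Pm) (hQQ : Qm ≤ Q0)
    (EPm EQ0 EQm : Matrix (Fin n) (Fin n) ℂ →ₗ[ℂ] Matrix (Fin n) (Fin n) ℂ)
    (hEP : IsCondExp τ Pm EPm) (hEQ0 : IsCondExp τ Q0 EQ0) (hEQm : IsCondExp τ Qm EQm)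
    (hcs : ∀ x, EPm (EQ0 x) = EQm x)
    (p₁ p₂ q₁ q₂ : Matrix (Fin n) (Fin n) ℂ)
    (hp₁P : p₁ ∈ Pm) (hp₂P : p₂ ∈ Pm)
    (hp₁c : ∀ y ∈ Qm, p₁ * y = y * p₁) (hp₂c : ∀ y ∈ Qm, p₂ * y = y * p₂)
    (hq₁Q : q₁ ∈ Q0) (hq₂Q : q₂ ∈ Q0)
    (hq₁c : ∀ y ∈ Qm, q₁ * y = y * q₁) (hq₂c : ∀ y ∈ Qm, q₂ * y = y * q₂)
    (hp₁ : p₁ * p₁ = p₁) (hp₁s : p₁ᴴ = p₁) (hp₂ : p₂ * p₂ = p₂) (hp₂s : p₂ᴴ = p₂)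
    (hporth : p₁ * p₂ = 0)
    (hq₁ : q₁ * q₁ = q₁) (hq₁s : q₁ᴴ = q₁) (hq₂ : q₂ * q₂ = q₂) (hq₂s : q₂ᴴ = q₂)
    (hqorth : q₁ * q₂ = 0)
    (hcomm : p₁ * q₁ - q₁ * p₁ = p₂ * q₂ - q₂ * p₂)
    (lam : ℂ) (hlam : ‖lam‖ = 1) :
    ∀ p ∈ Pm, EQm p = 0 → ∀ q ∈ Q0,
      τ (p * ((1 + (lam - 1) • (p₁ * q₁) + ((starRingEnd ℂ) lam - 1) • (p₂ * q₂)) * q *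
          (1 + (lam - 1) • (p₁ * q₁) + ((starRingEnd ℂ) lam - 1) • (p₂ * q₂))ᴴ)) = 0 :=
  petrescu_deformation_commuting_square_general τ htr hfaith Qm Pm Q0 EPm EQ0 EQm hEP hEQ0 hEQm hcs
    p₁ p₂ q₁ q₂ hp₁P hp₂P hp₁c hp₂c hq₁Q hq₂Q hq₁c hq₂c hp₁ hp₁s hp₂ hp₂s hporth hq₁ hq₁s hq₂ hq₂s
    lam hlam
end

section
/- Under the hypotheses of the previous construction (commuting square with orthogonal projections p₁,p₂ ∈ Q₋₁'∩P₋₁, q₁,q₂ ∈ Q₋₁'∩Q₀, q₁q₂ = 0, [p₁,q₁] = [p₂,q₂]), one has τ(p p₁ q₁ q q₂ p₂) = 0 and τ(p p₂ q₂ q q₁ p₁) = 0 for every p ∈ P₋₁ with E_{Q₋₁}(p) = 0 and every q ∈ Q₀. -/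
open Matrix

/-- Given a commuting square `(Q₋₁ ⊆ P₋₁ ⊆ P₀, Q₋₁ ⊆ Q₀ ⊆ P₀, τ)` in `P₀ = Mₙ(ℂ)`,
orthogonal projections `p₁, p₂ ∈ Q₋₁' ∩ P₋₁` and `q₁, q₂ ∈ Q₋₁' ∩ Q₀`, `q₁q₂ = 0`,
`[p₁,q₁] = [p₂,q₂]`: then `τ(p p₁ q₁ q q₂ p₂) = 0` and `τ(p p₂ q₂ q q₁ p₁) = 0`
for every `p ∈ P₋₁` with `E_{Q₋₁}(p) = 0` and every `q ∈ Q₀`. -/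
theorem petrescu_deformation_vanishing_traces {n : ℕ}
    (τ : Matrix (Fin n) (Fin n) ℂ →ₗ[ℂ] ℂ)
    (htr : ∀ x y, τ (x * y) = τ (y * x)) (hτ1 : τ 1 = 1)
    (hfaith : ∀ x, τ (xᴴ * x) = 0 → x = 0)
    (Qm Pm Q0 : StarSubalgebra ℂ (Matrix (Fin n) (Fin n) ℂ))
    (hQP : Qm ≤ Pm) (hQQ : Qm ≤ Q0)
    (EPm EQ0 EQm : Matrix (Fin n) (Fin n) ℂ →ₗ[ℂ] Matrix (Fin n) (Fin n) ℂ)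
    (hEP : IsCondExp τ Pm EPm) (hEQ0 : IsCondExp τ Q0 EQ0) (hEQm : IsCondExp τ Qm EQm)
    (hcs : ∀ x, EPm (EQ0 x) = EQm x)
    (p₁ p₂ q₁ q₂ : Matrix (Fin n) (Fin n) ℂ)
    (hp₁P : p₁ ∈ Pm) (hp₂P : p₂ ∈ Pm)
    (hp₁c : ∀ y ∈ Qm, p₁ * y = y * p₁) (hp₂c : ∀ y ∈ Qm, p₂ * y = y * p₂)
    (hq₁Q : q₁ ∈ Q0) (hq₂Q : q₂ ∈ Q0)
    (hq₁c : ∀ y ∈ Qm, q₁ * y = y * q₁) (hq₂c : ∀ y ∈ Qm, q₂ * y = y * q₂)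
    (hp₁ : p₁ * p₁ = p₁) (hp₁s : p₁ᴴ = p₁) (hp₂ : p₂ * p₂ = p₂) (hp₂s : p₂ᴴ = p₂)
    (hporth : p₁ * p₂ = 0)
    (hq₁ : q₁ * q₁ = q₁) (hq₁s : q₁ᴴ = q₁) (hq₂ : q₂ * q₂ = q₂) (hq₂s : q₂ᴴ = q₂)
    (hqorth : q₁ * q₂ = 0)
    (hcomm : p₁ * q₁ - q₁ * p₁ = p₂ * q₂ - q₂ * p₂)
    :
    ∀ p ∈ Pm, EQm p = 0 → ∀ q ∈ Q0,
      τ (p * p₁ * q₁ * q * q₂ * p₂) = 0 ∧ τ (p * p₂ * q₂ * q * q₁ * p₁) = 0 := by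
  intro p hpP hpE q hqQ
  -- basic consequence of the conditional expectation property
  have hτE : ∀ (B : StarSubalgebra ℂ (Matrix (Fin n) (Fin n) ℂ))
      (E : Matrix (Fin n) (Fin n) ℂ →ₗ[ℂ] Matrix (Fin n) (Fin n) ℂ),
      IsCondExp τ B E → ∀ x b, b ∈ B → τ (bᴴ * x) = τ (bᴴ * E x) := by
    intro B E hE x b hb
    have h := hE.2.2 x b hb
    rw [mul_sub, map_sub, sub_eq_zero] at h
    exact h
  -- E_{Qm} is "tracial" against elements commuting with Qm
  have swap : ∀ r : Matrix (Fin n) (Fin n) ℂ, (∀ y ∈ Qm, r * y = y * r) →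
      ∀ x, EQm (r * x) = EQm (x * r) := by
    intro r hc x
    set z := EQm (r * x) - EQm (x * r) with hz_def
    have hz : z ∈ Qm := sub_mem (hEQm.1 _) (hEQm.1 _)
    have hcyc : τ (zᴴ * (x * r)) = τ (zᴴ * (r * x)) := by
      have h1 : τ ((zᴴ * x) * r) = τ (r * (zᴴ * x)) := htr _ _
      have h2 : r * zᴴ = zᴴ * r := hc zᴴ (star_mem hz)
      calc τ (zᴴ * (x * r)) = τ ((zᴴ * x) * r) := by rw [mul_assoc]
        _ = τ (r * (zᴴ * x)) := h1
        _ = τ ((r * zᴴ) * x) := by rw [mul_assoc]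
        _ = τ ((zᴴ * r) * x) := by rw [h2]
        _ = τ (zᴴ * (r * x)) := by rw [mul_assoc]
    have h0 : τ (zᴴ * z) = 0 := by
      have e1 : τ (zᴴ * (r * x)) = τ (zᴴ * EQm (r * x)) := hτE Qm EQm hEQm _ _ hz
      have e2 : τ (zᴴ * (x * r)) = τ (zᴴ * EQm (x * r)) := hτE Qm EQm hEQm _ _ hz
      have : zᴴ * z = zᴴ * EQm (r * x) - zᴴ * EQm (x * r) := by
        rw [hz_def, mul_sub]
      rw [this, map_sub, ← e1, ← e2, hcyc, sub_self]
    have hz0 : z = 0 := hfaith z h0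
    exact sub_eq_zero.mp hz0
  -- the commuting-square vanishing lemma
  have hvan : ∀ A ∈ Pm, ∀ B ∈ Q0, EQm B = 0 → τ (A * B) = 0 := by
    intro A hA B hB h0
    have h1 : τ ((Aᴴ)ᴴ * B) = τ ((Aᴴ)ᴴ * EPm B) := hτE Pm EPm hEP B Aᴴ (star_mem hA)
    rw [conjTranspose_conjTranspose] at h1
    have h2 : EPm B = 0 := by
      have := hcs B
      rw [hEQ0.2.1 B hB] at this
      rw [this, h0]
    rw [h1, h2, mul_zero, map_zero]
  have hq21 : q₂ * q₁ = 0 := by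
    have : q₂ * q₁ = (q₁ * q₂)ᴴ := by rw [conjTranspose_mul, hq₁s, hq₂s]
    rw [this, hqorth, conjTranspose_zero]
  constructor
  · have hB0 : EQm (q₁ * (q * q₂)) = 0 := by
      rw [swap q₁ hq₁c (q * q₂), mul_assoc, hq21, mul_zero, map_zero]
    have hA : p₂ * (p * p₁) ∈ Pm := mul_mem hp₂P (mul_mem hpP hp₁P)
    have hB : q₁ * (q * q₂) ∈ Q0 := mul_mem hq₁Q (mul_mem hqQ hq₂Q)
    have hv := hvan _ hA _ hB hB0
    calc τ (p * p₁ * q₁ * q * q₂ * p₂)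
        = τ (p₂ * (p * p₁ * q₁ * q * q₂)) := htr _ _
      _ = τ ((p₂ * (p * p₁)) * (q₁ * (q * q₂))) := by simp only [mul_assoc]
      _ = 0 := hv
  · have hB0 : EQm (q₂ * (q * q₁)) = 0 := by
      rw [swap q₂ hq₂c (q * q₁), mul_assoc, hqorth, mul_zero, map_zero]
    have hA : p₁ * (p * p₂) ∈ Pm := mul_mem hp₁P (mul_mem hpP hp₂P)
    have hB : q₂ * (q * q₁) ∈ Q0 := mul_mem hq₂Q (mul_mem hqQ hq₁Q)
    have hv := hvan _ hA _ hB hB0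
    calc τ (p * p₂ * q₂ * q * q₁ * p₁)
        = τ (p₁ * (p * p₂ * q₂ * q * q₁)) := htr _ _
      _ = τ ((p₁ * (p * p₂)) * (q₂ * (q * q₁))) := by simp only [mul_assoc]
      _ = 0 := hv
end
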